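/- Let Σ be a finite bipartite graph with bipartition E ∪ O, let μ be uniform measure on the (nonempty) set of proper 3-colorings of Σ. Fix E' ⊆ E, O' ⊆ O, and subsets E'' ⊆ E \ E', O'' ⊆ O \ O'. Then conditioned on {χ ≡ 0 on E' and χ ≡ 1 on O'} (assumed to have positive probability), the probability that χ ≡ 0 on E'' and χ ≡ 1 on O'' is at least 3^{-|E'' ∪ O''|}. -/

import Mathlib

namespace Cond3Col

variable {V : Type*}

/-- One step inside the two-color cluster. -/
def Step (G : SimpleGraph V) (χ : V → Fin 3) (a b : Fin 3) (x y : V) : Prop :=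
  G.Adj x y ∧ (χ x = a ∨ χ x = b) ∧ (χ y = a ∨ χ y = b)

/-- `u` is in the `{a,b}`-cluster of `v`. -/
def InCl (G : SimpleGraph V) (χ : V → Fin 3) (a b : Fin 3) (v u : V) : Prop :=
  Relation.ReflTransGen (Step G χ a b) v u

open Classical in
/-- Swap colors `a` and `b` on the cluster of `v`. -/
noncomputable def swapCl (G : SimpleGraph V) (χ : V → Fin 3) (a b : Fin 3) (v : V) :
    V → Fin 3 :=
  fun u => if InCl G χ a b v u then Equiv.swap a b (χ u) else χ u

lemma mem_colors {G : SimpleGraph V} {χ : V → Fin 3} {a b : Fin 3} {v u : V}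
    (h : InCl G χ a b v u) (hv : χ v = a ∨ χ v = b) : χ u = a ∨ χ u = b := by
  induction h with
  | refl => exact hv
  | tail _ step _ => exact step.2.2

lemma swap_mem_of {a b x : Fin 3} (h : x = a ∨ x = b) :
    Equiv.swap a b x = a ∨ Equiv.swap a b x = b := by
  rcases h with h | h <;> subst h <;> simp

lemma swapCl_proper {G : SimpleGraph V} {χ : V → Fin 3} {a b : Fin 3} {v : V}
    (hp : ∀ x y, G.Adj x y → χ x ≠ χ y) (hv : χ v = a ∨ χ v = b) :
    ∀ x y, G.Adj x y → swapCl G χ a b v x ≠ swapCl G χ a b v y := by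
  intro x y adj
  unfold swapCl
  by_cases hx : InCl G χ a b v x <;> by_cases hy : InCl G χ a b v y <;>
    simp only [hx, hy, if_pos, if_neg, if_true, if_false]
  · exact fun h => hp x y adj ((Equiv.swap a b).injective h)
  · have hcx := mem_colors hx hv
    have hcy : ¬(χ y = a ∨ χ y = b) := fun hcy => hy (hx.tail ⟨adj, hcx, hcy⟩)
    intro h
    exact hcy (h ▸ swap_mem_of hcx)
  · have hcy := mem_colors hy hv
    have hcx : ¬(χ x = a ∨ χ x = b) := fun hcx =>
      hx (hy.tail ⟨adj.symm, hcy, hcx⟩)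
    intro h
    exact hcx (h.symm ▸ swap_mem_of hcy)
  · exact hp x y adj

lemma side_colors {G : SimpleGraph V} {χ : V → Fin 3} {a b : Fin 3} {v u : V}
    {P Q : Set V} (hdisj : Disjoint P Q)
    (hbip : ∀ x y, G.Adj x y → (x ∈ P ∧ y ∈ Q) ∨ (x ∈ Q ∧ y ∈ P))
    (hp : ∀ x y, G.Adj x y → χ x ≠ χ y)
    (hv : v ∈ P) (hχv : χ v = b)
    (h : InCl G χ a b v u) : (u ∈ P ∧ χ u = b) ∨ (u ∈ Q ∧ χ u = a) := by
  induction h with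
  | refl => exact Or.inl ⟨hv, hχv⟩
  | tail hvu step ih =>
    obtain ⟨adj, hcu, hcw⟩ := step
    rcases ih with ⟨hP, hcol⟩ | ⟨hQ, hcol⟩
    · rcases hbip _ _ adj with ⟨_, hwQ⟩ | ⟨huQ, _⟩
      · refine Or.inr ⟨hwQ, ?_⟩
        have hne := hp _ _ adj
        rcases hcw with h | h
        · exact h
        · exact absurd (hcol ▸ h : _ = χ _) (Ne.symm hne)
      · exact absurd hP (Set.disjoint_right.mp hdisj huQ)
    · rcases hbip _ _ adj with ⟨huP, _⟩ | ⟨_, hwP⟩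
      · exact absurd huP (Set.disjoint_left.mp hdisj · hQ)
      · refine Or.inl ⟨hwP, ?_⟩
        have hne := hp _ _ adj
        rcases hcw with h | h
        · exact absurd (hcol ▸ h : _ = χ _) (Ne.symm hne)
        · exact h

lemma swapCl_colors_iff {G : SimpleGraph V} {χ : V → Fin 3} {a b : Fin 3} {v u : V} :
    (swapCl G χ a b v u = a ∨ swapCl G χ a b v u = b) ↔ (χ u = a ∨ χ u = b) := by
  unfold swapCl
  by_cases h : InCl G χ a b v u <;> simp only [h, if_true, if_false]
  constructor
  · intro hs
    have := swap_mem_of hs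
    simpa using this
  · exact swap_mem_of

lemma inCl_swapCl_iff {G : SimpleGraph V} {χ : V → Fin 3} {a b : Fin 3} {v u : V} :
    InCl G (swapCl G χ a b v) a b v u ↔ InCl G χ a b v u := by
  have hstep : ∀ x y, Step G (swapCl G χ a b v) a b x y ↔ Step G χ a b x y := by
    intro x y
    unfold Step
    rw [swapCl_colors_iff, swapCl_colors_iff]
  constructor
  · exact Relation.ReflTransGen.mono (fun x y h => (hstep x y).mp h) v u
  · exact Relation.ReflTransGen.mono (fun x y h => (hstep x y).mpr h) v u

lemma swapCl_swapCl {G : SimpleGraph V} {χ : V → Fin 3} {a b : Fin 3} {v : V} :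
    swapCl G (swapCl G χ a b v) a b v = χ := by
  funext u
  by_cases h : InCl G χ a b v u
  · have h' : InCl G (swapCl G χ a b v) a b v u := inCl_swapCl_iff.mpr h
    simp [swapCl, h, h', Equiv.swap_apply_self]
  · have h' : ¬ InCl G (swapCl G χ a b v) a b v u := fun hh => h (inCl_swapCl_iff.mp hh)
    simp [swapCl, h, h']

lemma swapCl_apply_self {G : SimpleGraph V} {χ : V → Fin 3} {a b : Fin 3} {v : V}
    (hχv : χ v = b) : swapCl G χ a b v v = a := by
  have : InCl G χ a b v v := Relation.ReflTransGen.refl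
  simp [swapCl, this, hχv]

/-- The core counting step: fixing one more vertex to its target color loses at most a
factor 3. -/
lemma step_card [Fintype V] (G : SimpleGraph V) (P Q : Set V) (hdisj : Disjoint P Q)
    (hbip : ∀ x y, G.Adj x y → (x ∈ P ∧ y ∈ Q) ∨ (x ∈ Q ∧ y ∈ P))
    (A B : Set V) (hA : A ⊆ P) (hB : B ⊆ Q) (a b' : Fin 3) (hab : a ≠ b')
    (v : V) (hv : v ∈ P) :
    Nat.card {χ : V → Fin 3 // (∀ x y, G.Adj x y → χ x ≠ χ y) ∧
        (∀ w ∈ A, χ w = a) ∧ (∀ w ∈ B, χ w = b')} ≤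
      3 * Nat.card {χ : V → Fin 3 // (∀ x y, G.Adj x y → χ x ≠ χ y) ∧
        (∀ w ∈ insert v A, χ w = a) ∧ (∀ w ∈ B, χ w = b')} := by
  classical
  set S1 := {χ : V → Fin 3 // (∀ x y, G.Adj x y → χ x ≠ χ y) ∧
      (∀ w ∈ A, χ w = a) ∧ (∀ w ∈ B, χ w = b')}
  set S2 := {χ : V → Fin 3 // (∀ x y, G.Adj x y → χ x ≠ χ y) ∧
      (∀ w ∈ insert v A, χ w = a) ∧ (∀ w ∈ B, χ w = b')}
  -- the transformation
  have key : ∀ χ : V → Fin 3, (∀ x y, G.Adj x y → χ x ≠ χ y) →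
      (∀ w ∈ A, χ w = a) → (∀ w ∈ B, χ w = b') → χ v ≠ a →
      (∀ x y, G.Adj x y → swapCl G χ a (χ v) v x ≠ swapCl G χ a (χ v) v y) ∧
      (∀ w ∈ insert v A, swapCl G χ a (χ v) v w = a) ∧
      (∀ w ∈ B, swapCl G χ a (χ v) v w = b') := by
    intro χ hp hAχ hBχ hva
    have hvb : χ v = a ∨ χ v = χ v := Or.inr rfl
    refine ⟨swapCl_proper hp hvb, ?_, ?_⟩
    · intro w hw
      rcases Set.mem_insert_iff.mp hw with hwv | hwA
      · subst hwv; exact swapCl_apply_self rfl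
      · by_cases hcl : InCl G χ a (χ v) v w
        · rcases side_colors hdisj hbip hp hv rfl hcl with ⟨_, hcol⟩ | ⟨hwQ, _⟩
          · exact absurd (hAχ w hwA ▸ hcol).symm hva
          · exact absurd (hA hwA) (Set.disjoint_right.mp hdisj hwQ)
        · simp only [swapCl, if_neg hcl]
          exact hAχ w hwA
    · intro w hw
      by_cases hcl : InCl G χ a (χ v) v w
      · rcases side_colors hdisj hbip hp hv rfl hcl with ⟨hwP, _⟩ | ⟨_, hcol⟩
        · exact absurd (hB hw) (Set.disjoint_left.mp hdisj hwP)
        · exact absurd (hBχ w hw ▸ hcol) (Ne.symm hab)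
      · simp only [swapCl, if_neg hcl]
        exact hBχ w hw
  set T : (V → Fin 3) → (V → Fin 3) := fun χ =>
    if χ v = a then χ else swapCl G χ a (χ v) v with hT
  have hmem : ∀ χ : S1, (∀ x y, G.Adj x y → T χ.1 x ≠ T χ.1 y) ∧
      (∀ w ∈ insert v A, T χ.1 w = a) ∧ (∀ w ∈ B, T χ.1 w = b') := by
    rintro ⟨χ, hp, hAχ, hBχ⟩
    by_cases h : χ v = a
    · simp only [hT, if_pos h]
      refine ⟨hp, ?_, hBχ⟩
      intro w hw
      rcases Set.mem_insert_iff.mp hw with hwv | hwA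
      · subst hwv; exact h
      · exact hAχ w hwA
    · simp only [hT, if_neg h]
      exact key χ hp hAχ hBχ h
  let f : S1 → S2 × Fin 3 := fun χ => (⟨T χ.1, (hmem χ).1, (hmem χ).2.1, (hmem χ).2.2⟩, χ.1 v)
  have hinj : Function.Injective f := by
    rintro ⟨χ₁, h₁⟩ ⟨χ₂, h₂⟩ heq
    have hv12 : χ₁ v = χ₂ v := congrArg Prod.snd heq
    have hT12 : T χ₁ = T χ₂ := congrArg (fun p => (Prod.fst p).1) heq
    apply Subtype.ext
    by_cases hc : χ₁ v = a
    · have hc2 : χ₂ v = a := hv12 ▸ hc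
      simpa only [hT, if_pos hc, if_pos hc2] using hT12
    · have hc2 : χ₂ v ≠ a := fun h => hc (hv12 ▸ h)
      have h1 : T χ₁ = swapCl G χ₁ a (χ₁ v) v := by simp only [hT, if_neg hc]
      have h2 : T χ₂ = swapCl G χ₂ a (χ₂ v) v := by simp only [hT, if_neg hc2]
      have : swapCl G (swapCl G χ₁ a (χ₁ v) v) a (χ₁ v) v =
          swapCl G (swapCl G χ₂ a (χ₂ v) v) a (χ₂ v) v := by
        rw [← h1, ← h2, hT12, hv12]
      rwa [swapCl_swapCl, swapCl_swapCl] at this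
  calc Nat.card S1 ≤ Nat.card (S2 × Fin 3) := Nat.card_le_card_of_injective f hinj
    _ = 3 * Nat.card S2 := by simp [Nat.card_prod, mul_comm]

lemma card_congr_pred {p q : (V → Fin 3) → Prop} (h : ∀ χ, p χ ↔ q χ) :
    Nat.card {χ // p χ} = Nat.card {χ // q χ} :=
  Nat.card_congr (Equiv.subtypeEquivRight h)


lemma main_count [Fintype V] (G : SimpleGraph V) (EV OV : Set V) (hdisj : Disjoint EV OV)
    (hbip : ∀ u v, G.Adj u v → (u ∈ EV ∧ v ∈ OV) ∨ (u ∈ OV ∧ v ∈ EV))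
    (E' : Set V) (hE' : E' ⊆ EV) (O' : Set V) (hO' : O' ⊆ OV)
    (E'' : Set V) (hE'' : E'' ⊆ EV \ E') (O'' : Set V) (hO'' : O'' ⊆ OV \ O')
    (T : Finset V) (hT : ↑T ⊆ E'' ∪ O'') :
    Nat.card {χ : V → Fin 3 // (∀ u v, G.Adj u v → χ u ≠ χ v) ∧
        (∀ v ∈ E', χ v = 0) ∧ (∀ v ∈ O', χ v = 1)} ≤
      3 ^ T.card * Nat.card {χ : V → Fin 3 // (∀ u v, G.Adj u v → χ u ≠ χ v) ∧
        (∀ v ∈ E' ∪ (E'' ∩ ↑T), χ v = 0) ∧ (∀ v ∈ O' ∪ (O'' ∩ ↑T), χ v = 1)} := by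
  classical
  induction T using Finset.induction_on with
  | empty =>
    simp only [Finset.coe_empty, Set.inter_empty, Set.union_empty, Finset.card_empty, pow_zero,
      one_mul, le_refl]
  | insert v T hvT ih =>
    have hT' : ↑T ⊆ E'' ∪ O'' := fun x hx => hT (by simp [hx])
    have hvEO : v ∈ E'' ∪ O'' := hT (by simp)
    have IH := ih hT'
    have hcard : (insert v T).card = T.card + 1 := Finset.card_insert_of_notMem hvT
    rcases hvEO with hvE | hvO
    · -- v ∈ E''
      have hvEV : v ∈ EV := (hE'' hvE).1
      have hstep := step_card G EV OV hdisj hbip (E' ∪ (E'' ∩ ↑T)) (O' ∪ (O'' ∩ ↑T))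
        (by intro w hw; rcases hw with hw | hw
            · exact hE' hw
            · exact (hE'' hw.1).1)
        (by intro w hw; rcases hw with hw | hw
            · exact hO' hw
            · exact (hO'' hw.1).1)
        0 1 (by decide) v hvEV
      have hsetE : E' ∪ (E'' ∩ ↑(insert v T)) = insert v (E' ∪ (E'' ∩ ↑T)) := by
        ext x
        simp only [Finset.coe_insert, Set.mem_union, Set.mem_inter_iff, Set.mem_insert_iff]
        constructor
        · rintro (h | ⟨h1, (h2 | h2)⟩)
          · exact Or.inr (Or.inl h)
          · exact Or.inl h2
          · exact Or.inr (Or.inr ⟨h1, h2⟩)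
        · rintro (h | (h | ⟨h1, h2⟩))
          · exact Or.inr ⟨h ▸ hvE, Or.inl h⟩
          · exact Or.inl h
          · exact Or.inr ⟨h1, Or.inr h2⟩
      have hsetO : O'' ∩ ↑(insert v T) = O'' ∩ ↑T := by
        ext x
        simp only [Finset.coe_insert, Set.mem_inter_iff, Set.mem_insert_iff]
        constructor
        · rintro ⟨h1, (h2 | h2)⟩
          · exact absurd ((hE'' hvE).1) (Set.disjoint_right.mp hdisj (h2 ▸ (hO'' h1).1))
          · exact ⟨h1, h2⟩
        · rintro ⟨h1, h2⟩; exact ⟨h1, Or.inr h2⟩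
      rw [hsetE, hsetO, hcard]
      calc Nat.card _ ≤ 3 ^ T.card * Nat.card _ := IH
        _ ≤ 3 ^ T.card * (3 * Nat.card _) := Nat.mul_le_mul_left _ hstep
        _ = 3 ^ (T.card + 1) * Nat.card _ := by ring
    · -- v ∈ O''
      have hvOV : v ∈ OV := (hO'' hvO).1
      have hstep := step_card G OV EV hdisj.symm (fun u w h => (hbip u w h).symm)
        (O' ∪ (O'' ∩ ↑T)) (E' ∪ (E'' ∩ ↑T))
        (by intro w hw; rcases hw with hw | hw
            · exact hO' hw
            · exact (hO'' hw.1).1)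
        (by intro w hw; rcases hw with hw | hw
            · exact hE' hw
            · exact (hE'' hw.1).1)
        1 0 (by decide) v hvOV
      have hflip1 : Nat.card {χ : V → Fin 3 // (∀ u v, G.Adj u v → χ u ≠ χ v) ∧
          (∀ w ∈ E' ∪ (E'' ∩ ↑T), χ w = 0) ∧ (∀ w ∈ O' ∪ (O'' ∩ ↑T), χ w = 1)} =
          Nat.card {χ : V → Fin 3 // (∀ u v, G.Adj u v → χ u ≠ χ v) ∧
          (∀ w ∈ O' ∪ (O'' ∩ ↑T), χ w = 1) ∧ (∀ w ∈ E' ∪ (E'' ∩ ↑T), χ w = 0)} :=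
        card_congr_pred (by tauto)
      have hsetO : O' ∪ (O'' ∩ ↑(insert v T)) = insert v (O' ∪ (O'' ∩ ↑T)) := by
        ext x
        simp only [Finset.coe_insert, Set.mem_union, Set.mem_inter_iff, Set.mem_insert_iff]
        constructor
        · rintro (h | ⟨h1, (h2 | h2)⟩)
          · exact Or.inr (Or.inl h)
          · exact Or.inl h2
          · exact Or.inr (Or.inr ⟨h1, h2⟩)
        · rintro (h | (h | ⟨h1, h2⟩))
          · exact Or.inr ⟨h ▸ hvO, Or.inl h⟩
          · exact Or.inl h
          · exact Or.inr ⟨h1, Or.inr h2⟩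
      have hsetE : E'' ∩ ↑(insert v T) = E'' ∩ ↑T := by
        ext x
        simp only [Finset.coe_insert, Set.mem_inter_iff, Set.mem_insert_iff]
        constructor
        · rintro ⟨h1, (h2 | h2)⟩
          · exact absurd ((hO'' hvO).1) (Set.disjoint_left.mp hdisj (h2 ▸ (hE'' h1).1))
          · exact ⟨h1, h2⟩
        · rintro ⟨h1, h2⟩; exact ⟨h1, Or.inr h2⟩
      have hflip2 : Nat.card {χ : V → Fin 3 // (∀ u v, G.Adj u v → χ u ≠ χ v) ∧
          (∀ w ∈ insert v (O' ∪ (O'' ∩ ↑T)), χ w = 1) ∧ (∀ w ∈ E' ∪ (E'' ∩ ↑T), χ w = 0)} =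
          Nat.card {χ : V → Fin 3 // (∀ u v, G.Adj u v → χ u ≠ χ v) ∧
          (∀ w ∈ E' ∪ (E'' ∩ ↑T), χ w = 0) ∧ (∀ w ∈ insert v (O' ∪ (O'' ∩ ↑T)), χ w = 1)} :=
        card_congr_pred (by tauto)
      rw [← hflip1, hflip2] at hstep
      rw [hsetE, hsetO, hcard]
      refine le_trans IH ?_
      rw [pow_succ, mul_assoc]
      exact Nat.mul_le_mul_left _ hstep
    
end Cond3Col

/-- Let `Σ` be a finite bipartite graph with bipartition `EV ∪ OV` and let
`μ` be uniform measure on the set of proper 3-colorings. Fix `E' ⊆ EV`,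
`O' ⊆ OV`, `E'' ⊆ EV \ E'`, `O'' ⊆ OV \ O'`. Conditioned on
`{χ ≡ 0 on E' and χ ≡ 1 on O'}` (assumed nonempty), the probability that
`χ ≡ 0` on `E''` and `χ ≡ 1` on `O''` is at least `3^{-|E'' ∪ O''|}`.
Since `μ` is uniform, the conditional probability is the ratio of the two
counts. -/
theorem conditional_prob_zero_one_ge {V : Type*} [Fintype V]
    (G : SimpleGraph V) (EV OV : Set V) (hdisj : Disjoint EV OV)
    (hcover : EV ∪ OV = Set.univ)
    (hbip : ∀ u v, G.Adj u v → (u ∈ EV ∧ v ∈ OV) ∨ (u ∈ OV ∧ v ∈ EV))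
    (E' : Set V) (hE' : E' ⊆ EV) (O' : Set V) (hO' : O' ⊆ OV)
    (E'' : Set V) (hE'' : E'' ⊆ EV \ E') (O'' : Set V) (hO'' : O'' ⊆ OV \ O')
    (hne : ∃ χ : V → Fin 3, (∀ u v, G.Adj u v → χ u ≠ χ v) ∧
      (∀ v ∈ E', χ v = 0) ∧ (∀ v ∈ O', χ v = 1)) :
    ((3 : ℝ) ^ (E'' ∪ O'').ncard)⁻¹ ≤
      (Nat.card {χ : V → Fin 3 // (∀ u v, G.Adj u v → χ u ≠ χ v) ∧
          (∀ v ∈ E', χ v = 0) ∧ (∀ v ∈ O', χ v = 1) ∧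
          (∀ v ∈ E'', χ v = 0) ∧ (∀ v ∈ O'', χ v = 1)} : ℝ) /
        (Nat.card {χ : V → Fin 3 // (∀ u v, G.Adj u v → χ u ≠ χ v) ∧
          (∀ v ∈ E', χ v = 0) ∧ (∀ v ∈ O', χ v = 1)} : ℝ) := by
  classical
  obtain ⟨χ₀, h₀⟩ := hne
  have hfin : (E'' ∪ O'').Finite := Set.toFinite _
  have hTc : ↑hfin.toFinset = E'' ∪ O'' := hfin.coe_toFinset
  have hcount := Cond3Col.main_count G EV OV hdisj hbip E' hE' O' hO' E'' hE'' O'' hO''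
    hfin.toFinset (by rw [hTc])
  rw [hTc, Set.inter_eq_self_of_subset_left Set.subset_union_left,
    Set.inter_eq_self_of_subset_left Set.subset_union_right,
    ← Set.ncard_eq_toFinset_card _ hfin] at hcount
  have hmatch : Nat.card {χ : V → Fin 3 // (∀ u v, G.Adj u v → χ u ≠ χ v) ∧
      (∀ v ∈ E' ∪ E'', χ v = 0) ∧ (∀ v ∈ O' ∪ O'', χ v = 1)} =
      Nat.card {χ : V → Fin 3 // (∀ u v, G.Adj u v → χ u ≠ χ v) ∧
      (∀ v ∈ E', χ v = 0) ∧ (∀ v ∈ O', χ v = 1) ∧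
      (∀ v ∈ E'', χ v = 0) ∧ (∀ v ∈ O'', χ v = 1)} :=
    Cond3Col.card_congr_pred (by
      intro χ
      simp only [Set.mem_union, or_imp, forall_and]
      tauto)
  rw [hmatch] at hcount
  set n := Nat.card {χ : V → Fin 3 // (∀ u v, G.Adj u v → χ u ≠ χ v) ∧
      (∀ v ∈ E', χ v = 0) ∧ (∀ v ∈ O', χ v = 1) ∧
      (∀ v ∈ E'', χ v = 0) ∧ (∀ v ∈ O'', χ v = 1)} with hn
  set m := Nat.card {χ : V → Fin 3 // (∀ u v, G.Adj u v → χ u ≠ χ v) ∧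
      (∀ v ∈ E', χ v = 0) ∧ (∀ v ∈ O', χ v = 1)} with hm
  have hmpos : 0 < m := by
    have : Nonempty {χ : V → Fin 3 // (∀ u v, G.Adj u v → χ u ≠ χ v) ∧
        (∀ v ∈ E', χ v = 0) ∧ (∀ v ∈ O', χ v = 1)} := ⟨⟨χ₀, h₀⟩⟩
    exact Nat.card_pos
  have hmR : (0:ℝ) < m := by exact_mod_cast hmpos
  have h3 : (0:ℝ) < 3 ^ (E'' ∪ O'').ncard := by positivity
  have key : (m:ℝ) ≤ 3 ^ (E'' ∪ O'').ncard * n := by exact_mod_cast hcount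
  rw [le_div_iff₀ hmR, inv_mul_le_iff₀ h3]
  linarith
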